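/- For all f, v ∈ ℕ, the convex hull of the set of matrices in [0,1]^{f×v} of rank at most 1 equals the convex hull of the set of matrices in {0,1}^{f×v} of rank at most 1; equivalently, for any W ∈ ℝ^{f×v}, the maximum of ⟨W,R⟩ over all rank-at-most-1 matrices R ∈ [0,1]^{f×v} is attained at a 0/1 rank-at-most-1 matrix. -/

import Mathlib

/-- The Frobenius inner product `⟨W, R⟩ = Σ_{i,j} W_{ij}·R_{ij}`. -/
def frob {f v : ℕ} (W R : Matrix (Fin f) (Fin v) ℝ) : ℝ :=
  ∑ i, ∑ j, W i j * R i j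

/-!
A rank-at-most-one matrix with entries in `[0, 1]` can be written `x yᵀ` with `x` and `y` in
the unit cubes. Each cube is the convex hull of its 0/1 vertices and `(x, y) ↦ x yᵀ` is
bilinear, so `x yᵀ` is a convex combination of products of 0/1 vectors, which are 0/1 matrices
of rank at most one. The maximum of the linear functional `⟨W, ·⟩` over the hull of this finite
set is attained at one of its points.
-/

open Matrix Set

theorem LinearMap.apply_mem_convexHull_image2 {𝕜 E F G : Type*} [CommSemiring 𝕜]
    [PartialOrder 𝕜] [AddCommMonoid E] [Module 𝕜 E] [AddCommMonoid F] [Module 𝕜 F]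
    [AddCommMonoid G] [Module 𝕜 G] (B : E →ₗ[𝕜] F →ₗ[𝕜] G) {s : Set E} {t : Set F}
    {x : E} {y : F} (hx : x ∈ convexHull 𝕜 s) (hy : y ∈ convexHull 𝕜 t) :
    B x y ∈ convexHull 𝕜 (image2 (fun a b ↦ B a b) s t) := by
  have hBx : B x '' convexHull 𝕜 t ⊆ convexHull 𝕜 (image2 (fun a b ↦ B a b) s t) := by
    rw [LinearMap.image_convexHull]
    refine convexHull_min ?_ (convex_convexHull 𝕜 _)
    rintro _ ⟨b, hb, rfl⟩
    have hBb : B.flip b '' convexHull 𝕜 s ⊆ convexHull 𝕜 (image2 (fun a b ↦ B a b) s t) := by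
      rw [LinearMap.image_convexHull]
      exact convexHull_mono (image_subset_iff.2 fun a ha ↦ mem_image2_of_mem ha hb)
    exact hBb ⟨x, hx, rfl⟩
  exact hBx ⟨y, hy, rfl⟩

theorem ConvexOn.exists_isMaxOn_convexHull {𝕜 E : Type*} [Field 𝕜] [LinearOrder 𝕜]
    [IsStrictOrderedRing 𝕜] [AddCommGroup E] [Module 𝕜 E] {s : Set E} {φ : E → 𝕜}
    (hφ : ConvexOn 𝕜 (convexHull 𝕜 s) φ) (hs : s.Finite) (hne : s.Nonempty) :
    ∃ x₀ ∈ s, IsMaxOn φ (convexHull 𝕜 s) x₀ := by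
  obtain ⟨x₀, hx₀, hmax⟩ := s.exists_max_image φ hs hne
  refine ⟨x₀, hx₀, fun y hy ↦ ?_⟩
  obtain ⟨z, hz, hyz⟩ := hφ.exists_ge_of_mem_convexHull (subset_convexHull 𝕜 s) hy
  exact hyz.trans (hmax z hz)

theorem Set.pi_Icc_zero_one_eq_convexHull {ι 𝕜 : Type*} [Finite ι] [Field 𝕜] [LinearOrder 𝕜]
    [IsStrictOrderedRing 𝕜] :
    univ.pi (fun _ : ι ↦ Icc (0 : 𝕜) 1) = convexHull 𝕜 (univ.pi fun _ : ι ↦ {0, 1}) := by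
  simp only [convexHull_pi, convexHull_pair, segment_eq_Icc zero_le_one]

namespace Matrix

variable {m n K : Type*} [Fintype n] [Field K]

theorem exists_eq_vecMulVec_of_rank_le_one [Fintype m] {R : Matrix m n K} (h : R.rank ≤ 1) :
    ∃ (x : m → K) (y : n → K), R = vecMulVec x y := by
  rw [rank_eq_finrank_span_cols, Submodule.finrank_le_one_iff_isPrincipal] at h
  obtain ⟨x, hx⟩ := h
  have hcol : ∀ j, ∃ c : K, c • x = R.col j := fun j ↦ by
    rw [← Submodule.mem_span_singleton, ← hx]
    exact Submodule.subset_span (mem_range_self j)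
  choose y hy using hcol
  refine ⟨x, y, ext fun i j ↦ ?_⟩
  rw [vecMulVec_apply, mul_comm, ← smul_eq_mul, ← Pi.smul_apply, hy, col_apply]

variable (m n K) in
def zeroOneRankLeOne : Set (Matrix m n K) :=
  {R | (∀ i j, R i j = 0 ∨ R i j = 1) ∧ R.rank ≤ 1}

theorem zero_mem_zeroOneRankLeOne : (0 : Matrix m n K) ∈ zeroOneRankLeOne m n K :=
  ⟨fun _ _ ↦ Or.inl rfl, by simp⟩

theorem zeroOneRankLeOne_finite [Finite m] : (zeroOneRankLeOne m n K).Finite :=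
  (Finite.pi fun _ ↦ Finite.pi fun _ ↦ toFinite {(0 : K), 1}).subset
    fun _ hR i _ j _ ↦ hR.1 i j

theorem vecMulVec_mem_zeroOneRankLeOne {x : m → K} {y : n → K} (hx : ∀ i, x i = 0 ∨ x i = 1)
    (hy : ∀ j, y j = 0 ∨ y j = 1) : vecMulVec x y ∈ zeroOneRankLeOne m n K := by
  refine ⟨fun i j ↦ ?_, rank_vecMulVec_le x y⟩
  rcases hx i with h | h <;> rcases hy j with h' | h' <;> simp [vecMulVec_apply, h, h']

variable [LinearOrder K] [IsStrictOrderedRing K]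

/-- Normalising by the largest entry `R i₀ j₀` writes `R` as the column `R · j₀ / R i₀ j₀`
times the row `R i₀ ·`, both with entries in `[0, 1]`. -/
theorem exists_eq_vecMulVec_Icc_of_rank_le_one [Fintype m] {R : Matrix m n K}
    (hR : ∀ i j, R i j ∈ Icc (0 : K) 1) (h : R.rank ≤ 1) :
    ∃ (x : m → K) (y : n → K), (∀ i, x i ∈ Icc (0 : K) 1) ∧ (∀ j, y j ∈ Icc (0 : K) 1) ∧
      R = vecMulVec x y := by
  by_cases hR0 : R = 0
  · exact ⟨0, 0, fun _ ↦ by simp, fun _ ↦ by simp, by simp [hR0]⟩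
  obtain ⟨i₁, j₁, hij₁⟩ : ∃ i j, R i j ≠ 0 := by
    by_contra! h0
    exact hR0 (ext h0)
  have : Nonempty (m × n) := ⟨(i₁, j₁)⟩
  obtain ⟨⟨i₀, j₀⟩, hmax⟩ := Finite.exists_max fun p : m × n ↦ R p.1 p.2
  have hpos : 0 < R i₀ j₀ := ((hR i₁ j₁).1.lt_of_ne' hij₁).trans_le (hmax (i₁, j₁))
  obtain ⟨x, y, rfl⟩ := exists_eq_vecMulVec_of_rank_le_one h
  refine ⟨fun i ↦ vecMulVec x y i j₀ / vecMulVec x y i₀ j₀, fun j ↦ vecMulVec x y i₀ j,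
    fun i ↦ ⟨div_nonneg (hR i j₀).1 hpos.le, div_le_one_of_le₀ (hmax (i, j₀)) hpos.le⟩,
    fun j ↦ hR i₀ j, ext fun i j ↦ ?_⟩
  simp only [vecMulVec_apply] at hpos ⊢
  have hx₀ : x i₀ ≠ 0 := left_ne_zero_of_mul hpos.ne'
  have hy₀ : y j₀ ≠ 0 := right_ne_zero_of_mul hpos.ne'
  field_simp

variable (m n K) in
def boxRankLeOne : Set (Matrix m n K) :=
  {R | (∀ i j, R i j ∈ Icc (0 : K) 1) ∧ R.rank ≤ 1}

theorem zeroOneRankLeOne_subset_boxRankLeOne :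
    zeroOneRankLeOne m n K ⊆ boxRankLeOne m n K := by
  rintro R ⟨h01, hrank⟩
  refine ⟨fun i j ↦ ?_, hrank⟩
  rcases h01 i j with h | h <;> simp [h]

theorem boxRankLeOne_subset_convexHull [Fintype m] :
    boxRankLeOne m n K ⊆ convexHull K (zeroOneRankLeOne m n K) := by
  rintro R ⟨hR, hrank⟩
  obtain ⟨x, y, hx, hy, rfl⟩ := exists_eq_vecMulVec_Icc_of_rank_le_one hR hrank
  have hx' : x ∈ convexHull K (univ.pi fun _ : m ↦ {0, 1}) :=
    pi_Icc_zero_one_eq_convexHull (ι := m) (𝕜 := K) ▸ fun i _ ↦ hx i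
  have hy' : y ∈ convexHull K (univ.pi fun _ : n ↦ {0, 1}) :=
    pi_Icc_zero_one_eq_convexHull (ι := n) (𝕜 := K) ▸ fun j _ ↦ hy j
  refine convexHull_mono ?_ ((vecMulVecBilin K K).apply_mem_convexHull_image2 hx' hy')
  rintro _ ⟨a, ha, b, hb, rfl⟩
  exact vecMulVec_mem_zeroOneRankLeOne (fun i ↦ ha i trivial) (fun j ↦ hb j trivial)

theorem convexHull_boxRankLeOne [Fintype m] :
    convexHull K (boxRankLeOne m n K) = convexHull K (zeroOneRankLeOne m n K) :=
  (convexHull_min boxRankLeOne_subset_convexHull (convex_convexHull K _)).antisymm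
    (convexHull_mono zeroOneRankLeOne_subset_boxRankLeOne)

end Matrix

def frobLinearMap {f v : ℕ} (W : Matrix (Fin f) (Fin v) ℝ) :
    Matrix (Fin f) (Fin v) ℝ →ₗ[ℝ] ℝ where
  toFun := frob W
  map_add' P Q := by simp only [frob, Matrix.add_apply, mul_add, Finset.sum_add_distrib]
  map_smul' c P := by
    simp only [frob, Matrix.smul_apply, smul_eq_mul, Finset.mul_sum, RingHom.id_apply,
      mul_left_comm]

/-- The convex hull of the rank-at-most-one matrices with entries in `[0,1]` equals the convex
hull of the rank-at-most-one matrices with entries in `{0,1}`; equivalently, for any `W` the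
maximum of `⟨W, R⟩` over rank-at-most-one matrices `R ∈ [0,1]^{f×v}` is attained at a
rank-at-most-one 0/1 matrix. -/
theorem convexHull_rankOne_box_eq_convexHull_rankOne_zeroOne (f v : ℕ)
    (W : Matrix (Fin f) (Fin v) ℝ) :
    convexHull ℝ {R : Matrix (Fin f) (Fin v) ℝ |
        (∀ i j, R i j ∈ Set.Icc (0 : ℝ) 1) ∧ R.rank ≤ 1} =
      convexHull ℝ {R : Matrix (Fin f) (Fin v) ℝ |
        (∀ i j, R i j = 0 ∨ R i j = 1) ∧ R.rank ≤ 1} ∧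
    ∃ R₀ : Matrix (Fin f) (Fin v) ℝ, (∀ i j, R₀ i j = 0 ∨ R₀ i j = 1) ∧ R₀.rank ≤ 1 ∧
      IsGreatest {a | ∃ R : Matrix (Fin f) (Fin v) ℝ,
        (∀ i j, R i j ∈ Set.Icc (0 : ℝ) 1) ∧ R.rank ≤ 1 ∧ a = frob W R} (frob W R₀) := by
  refine ⟨convexHull_boxRankLeOne, ?_⟩
  obtain ⟨R₀, hR₀, hmax⟩ :=
    ((frobLinearMap W).convexOn (convex_convexHull ℝ _)).exists_isMaxOn_convexHull
      zeroOneRankLeOne_finite ⟨0, zero_mem_zeroOneRankLeOne⟩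
  refine ⟨R₀, hR₀.1, hR₀.2, ⟨R₀, (zeroOneRankLeOne_subset_boxRankLeOne hR₀).1, hR₀.2, rfl⟩, ?_⟩
  rintro _ ⟨R, hR, hrank, rfl⟩
  exact hmax (boxRankLeOne_subset_convexHull ⟨hR, hrank⟩)
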